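/- Fix an integer n > 1. Every global minimizer (a1,a2,b1,b2,α) of Problem (Q) satisfies b1+b2 < a1+a2. -/

import Mathlib

/-!
If a feasible point had `a1 + a2 ≤ b1 + b2`, the linear constraint would force `α ≥ 1/2`; together
with `a1 ≥ 1` this gives `F ≥ 2(n - 1)·a1 + 2√n·α ≥ 2(n - 1) + 1`. But the feasible point
`(1, -1/n, -1, 1/n, 0)` has `F = 2(n - 1)`, so such a point is never a minimizer.
-/

/-- Objective of Problem (Q). -/
noncomputable def FQ (n : ℕ) (a1 a2 b1 b2 α : ℝ) : ℝ :=
  ((n : ℝ) - 1) * Real.sqrt (2 * (a1 ^ 2 + b1 ^ 2) + 2 * |a1 ^ 2 - b1 ^ 2|) +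
    2 * Real.sqrt ((a1 + n * a2) ^ 2 + n * α ^ 2)

/-- Feasible set of Problem (Q). -/
def FeasQ (n : ℕ) (a1 a2 b1 b2 α : ℝ) : Prop :=
  1 ≤ a1 ∧ b1 + b2 - α + 1 ≤ a1 + a2 + α ∧ a1 + b1 + n * (a2 + b2) = 0

open Real

lemma two_mul_abs_le_sqrt_two_mul_add_abs (a b : ℝ) :
    2 * |a| ≤ √(2 * (a ^ 2 + b ^ 2) + 2 * |a ^ 2 - b ^ 2|) := by
  apply le_sqrt_of_sq_le
  nlinarith [le_abs_self (a ^ 2 - b ^ 2), sq_abs a]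

lemma sqrt_mul_abs_le_sqrt_sq_add_mul (c x : ℝ) {n : ℝ} (hn : 0 ≤ n) :
    √n * |x| ≤ √(c ^ 2 + n * x ^ 2) := by
  rw [← sqrt_sq_eq_abs, ← sqrt_mul hn]
  exact sqrt_le_sqrt (by nlinarith [sq_nonneg c])

lemma half_le_of_FeasQ_of_add_le_add {n : ℕ} {a1 a2 b1 b2 α : ℝ}
    (h : FeasQ n a1 a2 b1 b2 α) (hab : a1 + a2 ≤ b1 + b2) : 1 / 2 ≤ α := by
  linarith [h.2.1]

lemma FeasQ_reference_point {n : ℕ} (hn : 1 < n) : FeasQ n 1 (-(1 / n)) (-1) (1 / n) 0 := by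
  have hn' : (2 : ℝ) ≤ n := by exact_mod_cast hn
  refine ⟨le_rfl, ?_, ?_⟩
  · have : (1 : ℝ) / n ≤ 1 / 2 := one_div_le_one_div_of_le two_pos hn'
    linarith
  · field_simp
    ring

lemma FQ_reference_point {n : ℕ} (hn : n ≠ 0) :
    FQ n 1 (-(1 / n)) (-1) (1 / n) 0 = 2 * ((n : ℝ) - 1) := by
  have hcancel : (1 : ℝ) + n * -(1 / n) = 0 := by field_simp; ring
  rw [FQ, hcancel]
  norm_num
  ring

lemma two_mul_sub_one_add_one_le_FQ {n : ℕ} (hn : 1 ≤ n) {a1 a2 b1 b2 α : ℝ}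
    (ha1 : 1 ≤ a1) (hα : 1 / 2 ≤ α) : 2 * ((n : ℝ) - 1) + 1 ≤ FQ n a1 a2 b1 b2 α := by
  have hn' : (1 : ℝ) ≤ n := by exact_mod_cast hn
  have hfirst :
      2 * ((n : ℝ) - 1) ≤ ((n : ℝ) - 1) * √(2 * (a1 ^ 2 + b1 ^ 2) + 2 * |a1 ^ 2 - b1 ^ 2|) :=
    calc 2 * ((n : ℝ) - 1) ≤ ((n : ℝ) - 1) * (2 * |a1|) := by
          nlinarith [le_abs_self a1]
      _ ≤ _ := mul_le_mul_of_nonneg_left (two_mul_abs_le_sqrt_two_mul_add_abs a1 b1) (by linarith)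
  have hsecond : 1 ≤ 2 * √((a1 + n * a2) ^ 2 + n * α ^ 2) :=
    calc (1 : ℝ) ≤ 2 * (√n * |α|) := by
          have : 1 ≤ √(n : ℝ) := one_le_sqrt.mpr hn'
          nlinarith [le_abs_self α]
      _ ≤ _ := by gcongr; exact sqrt_mul_abs_le_sqrt_sq_add_mul _ _ (by positivity)
  rw [FQ]
  linarith

/-- Key step in the proof of Theorem 2: every global minimizer of Problem (Q)
satisfies `b1 + b2 < a1 + a2`. -/
theorem Q_minimizer_b_lt_a (n : ℕ) (hn : 1 < n)
    (a1 a2 b1 b2 α : ℝ)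
    (hfeas : FeasQ n a1 a2 b1 b2 α)
    (hmin : ∀ a1' a2' b1' b2' α' : ℝ,
      FeasQ n a1' a2' b1' b2' α' → FQ n a1 a2 b1 b2 α ≤ FQ n a1' a2' b1' b2' α') :
    b1 + b2 < a1 + a2 := by
  by_contra! hab
  have hlow : 2 * ((n : ℝ) - 1) + 1 ≤ FQ n a1 a2 b1 b2 α :=
    two_mul_sub_one_add_one_le_FQ hn.le hfeas.1 (half_le_of_FeasQ_of_add_le_add hfeas hab)
  have hup := hmin _ _ _ _ _ (FeasQ_reference_point hn)
  rw [FQ_reference_point (by omega)] at hup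
  linarith
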